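/- arXiv:1612.05929 — 5 statements merged into one kernel-verified Lean document; each statement's English description precedes it below -/
import Mathlib

section
/- If R is an involutive solution of the braid relation on V⊗V (R₁₂R₂₃R₁₂ = R₂₃R₁₂R₂₃ and R² = I), then for any nonzero constant a, the operator R(u,v) = R - (a/(u-v))·I satisfies the quantum Yang–Baxter equation R₁₂(u,v) R₂₃(u,w) R₁₂(v,w) = R₂₃(v,w) R₁₂(u,w) R₂₃(u,v) whenever u, v, w are pairwise distinct. -/
/-! Expanding `(A - x)(B - y)(A - z)` for the involutions `A = R₁₂`, `B = R₂₃`, the braid relation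
matches the cubic terms and `A² = B² = 1` turns the quadratic ones into scalars; what remains is
`(xy + yz - xz)(A - B)`, and `xy + yz = xz` for `x = a/(u-v)`, `y = a/(u-w)`, `z = a/(v-w)`
is a partial-fraction identity. -/

open Matrix BigOperators

variable {K : Type*} [Field K] [CharZero K]

def lift12 {N : ℕ} (A : Matrix (Fin N × Fin N) (Fin N × Fin N) K) :
    Matrix (Fin N × Fin N × Fin N) (Fin N × Fin N × Fin N) K :=
  Matrix.of fun p q => A (p.1, p.2.1) (q.1, q.2.1) * (if p.2.2 = q.2.2 then 1 else 0)

def lift23 {N : ℕ} (A : Matrix (Fin N × Fin N) (Fin N × Fin N) K) :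
    Matrix (Fin N × Fin N × Fin N) (Fin N × Fin N × Fin N) K :=
  Matrix.of fun p q => (if p.1 = q.1 then 1 else 0) * A (p.2.1, p.2.2) (q.2.1, q.2.2)

/-- The rational Baxterization R(u,v) = R − (a/(u−v))·I of an involutive symmetry. -/
def ratBax {N : ℕ} (R : Matrix (Fin N × Fin N) (Fin N × Fin N) K) (a u v : K) :
    Matrix (Fin N × Fin N) (Fin N × Fin N) K :=
  R - (a / (u - v)) • (1 : Matrix (Fin N × Fin N) (Fin N × Fin N) K)

theorem shifted_braid_of_involutive {R M : Type*} [CommRing R] [Ring M] [Algebra R M]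
    {A B : M} (hbraid : A * B * A = B * A * B) (hA : A * A = 1) (hB : B * B = 1)
    {x y z : R} (hxyz : x * y + y * z = x * z) :
    (A - x • 1) * (B - y • 1) * (A - z • 1) = (B - z • 1) * (A - y • 1) * (B - x • 1) := by
  simp only [sub_mul, mul_sub, smul_mul_assoc, mul_smul_comm, one_mul, mul_one, hbraid, hA, hB]
  linear_combination (norm := module) hxyz • (A - B)

section Lift

omit [CharZero K]

variable {N : ℕ}

theorem lift12_one : lift12 (1 : Matrix (Fin N × Fin N) (Fin N × Fin N) K) = 1 := by
  ext ⟨i, j, k⟩ ⟨i', j', k'⟩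
  simp only [lift12, of_apply, one_apply, Prod.mk.injEq]
  split_ifs <;> simp_all

theorem lift23_one : lift23 (1 : Matrix (Fin N × Fin N) (Fin N × Fin N) K) = 1 := by
  ext ⟨i, j, k⟩ ⟨i', j', k'⟩
  simp only [lift23, of_apply, one_apply, Prod.mk.injEq]
  split_ifs <;> simp_all

theorem lift12_mul (A B : Matrix (Fin N × Fin N) (Fin N × Fin N) K) :
    lift12 (A * B) = lift12 A * lift12 B := by
  ext p q
  simp [lift12, mul_apply, Fintype.sum_prod_type]

theorem lift23_mul (A B : Matrix (Fin N × Fin N) (Fin N × Fin N) K) :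
    lift23 (A * B) = lift23 A * lift23 B := by
  ext p q
  simp [lift23, mul_apply, Fintype.sum_prod_type, Finset.mul_sum]

theorem lift12_sub_smul_one (A : Matrix (Fin N × Fin N) (Fin N × Fin N) K) (c : K) :
    lift12 (A - c • 1) = lift12 A - c • 1 := by
  rw [← lift12_one]
  ext p q
  simp only [lift12, of_apply, Matrix.sub_apply, Matrix.smul_apply, smul_eq_mul]
  ring

theorem lift23_sub_smul_one (A : Matrix (Fin N × Fin N) (Fin N × Fin N) K) (c : K) :
    lift23 (A - c • 1) = lift23 A - c • 1 := by
  rw [← lift23_one]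
  ext p q
  simp only [lift23, of_apply, Matrix.sub_apply, Matrix.smul_apply, smul_eq_mul]
  ring

end Lift

theorem rational_baxterization_QYBE_general {N : ℕ}
    (R : Matrix (Fin N × Fin N) (Fin N × Fin N) K)
    (hbraid : lift12 R * lift23 R * lift12 R = lift23 R * lift12 R * lift23 R)
    (hinv : R * R = 1)
    (a : K) (u v w : K) (huv : u ≠ v) (huw : u ≠ w) (hvw : v ≠ w) :
    lift12 (ratBax R a u v) * lift23 (ratBax R a u w) * lift12 (ratBax R a v w) =
      lift23 (ratBax R a v w) * lift12 (ratBax R a u w) * lift23 (ratBax R a u v) := by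
  have h12 : lift12 R * lift12 R = 1 := by rw [← lift12_mul, hinv, lift12_one]
  have h23 : lift23 R * lift23 R = 1 := by rw [← lift23_mul, hinv, lift23_one]
  have hparam : a / (u - v) * (a / (u - w)) + a / (u - w) * (a / (v - w)) =
      a / (u - v) * (a / (v - w)) := by
    field_simp [sub_ne_zero.mpr huv, sub_ne_zero.mpr huw, sub_ne_zero.mpr hvw]
    ring
  simp only [ratBax, lift12_sub_smul_one, lift23_sub_smul_one]
  exact shifted_braid_of_involutive hbraid h12 h23 hparam

/-- the rational Baxterization of an involutive symmetry satisfies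
the quantum Yang–Baxter equation. -/
theorem rational_baxterization_QYBE {N : ℕ}
    (R : Matrix (Fin N × Fin N) (Fin N × Fin N) K)
    (hbraid : lift12 R * lift23 R * lift12 R = lift23 R * lift12 R * lift23 R)
    (hinv : R * R = 1)
    (a : K) (ha : a ≠ 0) (u v w : K) (huv : u ≠ v) (huw : u ≠ w) (hvw : v ≠ w) :
    lift12 (ratBax R a u v) * lift23 (ratBax R a u w) * lift12 (ratBax R a v w) =
      lift23 (ratBax R a v w) * lift12 (ratBax R a u w) * lift23 (ratBax R a u v) :=
  rational_baxterization_QYBE_general R hbraid hinv a u v w huv huw hvw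
end

section
/- Let R be a skew-invertible involutive symmetry and let L(u) = I + Σ_{k≥1} L[k]u^{−k} satisfy the braided Yangian relations R(u,v) L₁(u) R L₁(v) = L₁(v) R L₁(u) R(u,v) with R(u,v) = R − I/(u−v). If M is the generating matrix of the modified Reflection Equation algebra, satisfying R M₁ R M₁ − M₁ R M₁ R = R M₁ − M₁ R, then the matrix L(u) = I + M/u satisfies the braided Yangian relations; i.e., the evaluation map L(u) ↦ I + M/u is an algebra morphism from the braided Yangian to the modified RE algebra. -/
/-!
Put `a = u⁻¹`, `b = v⁻¹`, `c = (u - v)⁻¹`. Expanding both sides of the braided Yangian relation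
for `L(u) = 1 + a M₁` and using `R² = 1`, their difference is
`a b (R M₁ R M₁ − M₁ R M₁ R) + c (a − b) (R M₁ − M₁ R)`.
Partial fractions give `c (a − b) = − a b`, so the difference is `a b` times the defect of the
modified Reflection Equation, which vanishes.
-/

open Matrix BigOperators

variable {K : Type*} [Field K]

/-- M₁ = M ⊗ I : the matrix M placed in the first of the two tensor factors. -/
def emb1 {N : ℕ} {A : Type*} [Ring A] (M : Matrix (Fin N) (Fin N) A) :
    Matrix (Fin N × Fin N) (Fin N × Fin N) A :=
  Matrix.of fun p q => M p.1 q.1 * (if p.2 = q.2 then 1 else 0)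

theorem braidedYangian_sub_eq_of_mul_self_eq_one {S B : Type*} [CommRing S] [Ring B] [Algebra S B]
    {r : B} (hr : r * r = 1) (m : B) (a b c : S) :
    (r - c • 1) * (1 + a • m) * r * (1 + b • m) - (1 + b • m) * r * (1 + a • m) * (r - c • 1) =
      (a * b) • (r * m * r * m - m * r * m * r) + (c * (a - b)) • (r * m - m * r) := by
  simp only [mul_add, add_mul, mul_sub, sub_mul, smul_mul_assoc, mul_smul_comm, mul_one, one_mul,
    mul_assoc, hr]
  module

theorem inv_mul_inv_add_inv_sub_mul_inv_sub_inv {u v : K} (hu : u ≠ 0) (hv : v ≠ 0) (huv : u ≠ v) :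
    u⁻¹ * v⁻¹ + (u - v)⁻¹ * (u⁻¹ - v⁻¹) = 0 := by
  have : u - v ≠ 0 := sub_ne_zero_of_ne huv
  field_simp
  ring

/-- for an involutive symmetry R, if M satisfies the modified
Reflection Equation R M₁ R M₁ − M₁ R M₁ R = R M₁ − M₁ R, then L(u) = I + M/u
satisfies the braided Yangian relations
R(u,v) L₁(u) R L₁(v) = L₁(v) R L₁(u) R(u,v) with R(u,v) = R − I/(u−v);
i.e. the evaluation map is a morphism from the braided Yangian to the
modified RE algebra. -/
theorem evaluation_morphism_involutive {N : ℕ}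
    {A : Type*} [Ring A] [Algebra K A]
    (R : Matrix (Fin N × Fin N) (Fin N × Fin N) K)
    (hinv : R * R = 1)
    (M : Matrix (Fin N) (Fin N) A)
    (hmRE : R.map (algebraMap K A) * emb1 M * R.map (algebraMap K A) * emb1 M -
        emb1 M * R.map (algebraMap K A) * emb1 M * R.map (algebraMap K A) =
      R.map (algebraMap K A) * emb1 M - emb1 M * R.map (algebraMap K A)) :
    ∀ u v : K, u ≠ 0 → v ≠ 0 → u ≠ v →
      (R.map (algebraMap K A) -
          (u - v)⁻¹ • (1 : Matrix (Fin N × Fin N) (Fin N × Fin N) A)) *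
          (1 + u⁻¹ • emb1 M) * R.map (algebraMap K A) * (1 + v⁻¹ • emb1 M) =
        (1 + v⁻¹ • emb1 M) * R.map (algebraMap K A) * (1 + u⁻¹ • emb1 M) *
          (R.map (algebraMap K A) -
            (u - v)⁻¹ • (1 : Matrix (Fin N × Fin N) (Fin N × Fin N) A)) := by
  intro u v hu hv huv
  have hR : R.map (algebraMap K A) * R.map (algebraMap K A) = 1 := by
    rw [← Matrix.map_mul, hinv, Matrix.map_one _ (map_zero _) (map_one _)]
  rw [← sub_eq_zero, braidedYangian_sub_eq_of_mul_self_eq_one hR, hmRE, ← add_smul,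
    inv_mul_inv_add_inv_sub_mul_inv_sub_inv hu hv huv, zero_smul]
end

section
/- Let R be a skew-invertible Hecke symmetry and M the generating matrix of the RE algebra, satisfying R M₁ R M₁ = M₁ R M₁ R. Then L(u) = I + M/u satisfies (u−v)(R L₁(u) R L₁(v) − L₁(v) R L₁(u) R) = (q−q⁻¹) u (L₁(u) R L₁(v) − L₁(v) R L₁(u)); i.e., the evaluation map L(u) ↦ I + M/u is a morphism from the braided Yangian (trigonometric case) to the RE algebra. -/
/-!
In the algebra of matrices over the RE algebra write `S` for the image of `R` and `X` for `M₁`.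
Expanding both sides, every term of degree two in `X` cancels by the reflection equation
`S X S X = X S X S`, and what is left are the commutators `[S², X]` and `[S, X]`. The Hecke
relation `S² = (q - q⁻¹) S + 1` gives `[S², X] = (q - q⁻¹) [S, X]`, after which both sides are
scalar multiples of `[S, X]` with the same coefficient `(q - q⁻¹)(u/v - 1)`.
-/

open Matrix BigOperators

variable {K : Type*} [Field K]

section Evaluation

variable {B : Type*} [Ring B] [Algebra K B] {S : B} {lam : K}

theorem hecke_sq_mul_sub_mul_sq (hS : S * S = lam • S + 1) (X : B) :
    S * S * X - X * S * S = lam • (S * X - X * S) := by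
  rw [mul_assoc X S S, hS]
  simp only [add_mul, mul_add, smul_mul_assoc, mul_smul_comm, one_mul, mul_one, smul_sub]
  abel

theorem reflection_bracket_eq {X : B} (hRE : S * X * S * X = X * S * X * S) (a b : K) :
    S * (1 + a • X) * S * (1 + b • X) - (1 + b • X) * S * (1 + a • X) * S =
      b • (S * S * X - X * S * S) := by
  simp only [mul_add, add_mul, mul_one, one_mul, smul_mul_assoc, mul_smul_comm, smul_sub]
  rw [hRE]
  module

theorem linear_bracket_eq (X : B) (a b : K) :
    (1 + a • X) * S * (1 + b • X) - (1 + b • X) * S * (1 + a • X) = (b - a) • (S * X - X * S) := by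
  simp only [mul_add, add_mul, mul_one, one_mul, smul_mul_assoc, mul_smul_comm, smul_sub,
    sub_smul]
  module

theorem evaluation_relation_of_hecke_of_reflection {X : B} (hS : S * S = lam • S + 1)
    (hRE : S * X * S * X = X * S * X * S) {u v : K} (hu : u ≠ 0) (hv : v ≠ 0) :
    (u - v) • (S * (1 + u⁻¹ • X) * S * (1 + v⁻¹ • X) - (1 + v⁻¹ • X) * S * (1 + u⁻¹ • X) * S) =
      (lam * u) • ((1 + u⁻¹ • X) * S * (1 + v⁻¹ • X) - (1 + v⁻¹ • X) * S * (1 + u⁻¹ • X)) := by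
  rw [reflection_bracket_eq hRE, hecke_sq_mul_sub_mul_sq hS, linear_bracket_eq, smul_smul,
    smul_smul, smul_smul]
  congr 1
  field_simp

end Evaluation

theorem evaluation_morphism_hecke_general {N : ℕ}
    {A : Type*} [Ring A] [Algebra K A]
    (R : Matrix (Fin N × Fin N) (Fin N × Fin N) K) (q : K)
    (hHecke : R * R = (q - q⁻¹) • R + 1)
    (M : Matrix (Fin N) (Fin N) A)
    (hRE : R.map (algebraMap K A) * emb1 M * R.map (algebraMap K A) * emb1 M =
      emb1 M * R.map (algebraMap K A) * emb1 M * R.map (algebraMap K A)) :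
    ∀ u v : K, u ≠ 0 → v ≠ 0 → u ≠ v →
      (u - v) • (R.map (algebraMap K A) * (1 + u⁻¹ • emb1 M) *
            R.map (algebraMap K A) * (1 + v⁻¹ • emb1 M) -
          (1 + v⁻¹ • emb1 M) * R.map (algebraMap K A) *
            (1 + u⁻¹ • emb1 M) * R.map (algebraMap K A)) =
        ((q - q⁻¹) * u) • ((1 + u⁻¹ • emb1 M) * R.map (algebraMap K A) *
              (1 + v⁻¹ • emb1 M) -
            (1 + v⁻¹ • emb1 M) * R.map (algebraMap K A) * (1 + u⁻¹ • emb1 M)) := by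
  intro u v hu hv _
  have hS := congrArg (Algebra.ofId K A).mapMatrix hHecke
  rw [map_mul, map_add, map_smul, map_one] at hS
  exact evaluation_relation_of_hecke_of_reflection hS hRE hu hv

/-- for a Hecke symmetry R, if M satisfies the Reflection Equation
R M₁ R M₁ = M₁ R M₁ R, then L(u) = I + M/u satisfies
(u−v)(R L₁(u) R L₁(v) − L₁(v) R L₁(u) R) = (q−q⁻¹)u (L₁(u) R L₁(v) − L₁(v) R L₁(u));
i.e. the evaluation map is a morphism from the braided Yangian (trigonometric case)
to the RE algebra. -/
theorem evaluation_morphism_hecke {N : ℕ}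
    {A : Type*} [Ring A] [Algebra K A]
    (R : Matrix (Fin N × Fin N) (Fin N × Fin N) K) (q : K)
    (hHecke : R * R = (q - q⁻¹) • R + 1) (hq0 : q ≠ 0)
    (M : Matrix (Fin N) (Fin N) A)
    (hRE : R.map (algebraMap K A) * emb1 M * R.map (algebraMap K A) * emb1 M =
      emb1 M * R.map (algebraMap K A) * emb1 M * R.map (algebraMap K A)) :
    ∀ u v : K, u ≠ 0 → v ≠ 0 → u ≠ v →
      (u - v) • (R.map (algebraMap K A) * (1 + u⁻¹ • emb1 M) *
            R.map (algebraMap K A) * (1 + v⁻¹ • emb1 M) -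
          (1 + v⁻¹ • emb1 M) * R.map (algebraMap K A) *
            (1 + u⁻¹ • emb1 M) * R.map (algebraMap K A)) =
        ((q - q⁻¹) * u) • ((1 + u⁻¹ • emb1 M) * R.map (algebraMap K A) *
              (1 + v⁻¹ • emb1 M) -
            (1 + v⁻¹ • emb1 M) * R.map (algebraMap K A) * (1 + u⁻¹ • emb1 M)) :=
  evaluation_morphism_hecke_general R q hHecke M hRE
end

section
/- Let R be a skew-invertible Hecke symmetry, B = Tr₁Ψ, and let a_i⁺, a^j be operators on the R-Fock space F(R) = Sym_R(V) satisfying q a_i⁺a_j⁺ = R_{ij}^{kl} a_k⁺a_l⁺, q a^i a^j = R_{lk}^{ji} a^k a^l, and a^j a_i⁺ − q⁻¹ (R⁻¹)_{ik}^{jl} a_l⁺ a^k = δ_i^j. Then the elements l_i^j = a_i⁺ a^k B_k^j satisfy the modified Reflection Equation relations R L₁ R L₁ − L₁ R L₁ R = R L₁ − L₁ R; i.e., the bosonization map l_i^j ↦ a_i⁺ a^k B_k^j is a representation of the modified RE algebra. -/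
open Matrix BigOperators

variable {K : Type*} [Field K]

/-- L₁ = L ⊗ I for the matrix with entries l_i^j = x_i x^j. -/
def bosL1 {N : ℕ} {A : Type*} [Ring A] (x y : Fin N → A) :
    Matrix (Fin N × Fin N) (Fin N × Fin N) A :=
  Matrix.of fun p q => (x p.1 * y q.1) * (if p.2 = q.2 then 1 else 0)

/-!
Contracting the mixed relation with `R` in the middle of `L₁ R L₁` gives
`L₁ R L₁ = L₁ + q⁻¹ X`, where `X` is the rank-one matrix `X_{ij}^{mn} = x_i x_j x^n x^m`.
The two quadratic relations say exactly that `x ⊗ x` is a right and `x^n x^m` a left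
eigenvector of `R` with eigenvalue `q`, so `R X = q X = X R`. Hence
`R L₁ R L₁ - R L₁ = q⁻¹ R X` and `L₁ R L₁ R - L₁ R = q⁻¹ X R` coincide.
-/

section QuadraticRelations

variable {ι S A : Type*} [Fintype ι] [CommSemiring S] [Semiring A] [Algebra S A]

theorem map_mulVec_mul_self_eq_smul {R : Matrix (ι × ι) (ι × ι) S} {q : S} {x : ι → A}
    (h : ∀ i j, q • (x i * x j) = ∑ k, ∑ l, R (i, j) (k, l) • (x k * x l)) :
    (R.map (algebraMap S A)) *ᵥ (fun p => x p.1 * x p.2) = q • fun p => x p.1 * x p.2 := by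
  ext ⟨i, j⟩
  simp only [mulVec, dotProduct, Fintype.sum_prod_type, map_apply, ← Algebra.smul_def,
    Pi.smul_apply, h]

theorem mul_self_swap_vecMul_map_eq_smul {R : Matrix (ι × ι) (ι × ι) S} {q : S} {y : ι → A}
    (h : ∀ i j, q • (y i * y j) = ∑ k, ∑ l, R (l, k) (j, i) • (y k * y l)) :
    (fun p => y p.2 * y p.1) ᵥ* R.map (algebraMap S A) = q • fun p => y p.2 * y p.1 := by
  ext ⟨m, n⟩
  simp only [vecMul, dotProduct, Fintype.sum_prod_type, map_apply, ← Algebra.commutes,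
    ← Algebra.smul_def, Pi.smul_apply, h]
  exact Finset.sum_comm

end QuadraticRelations

section BosL1

variable {N : ℕ}

theorem bosL1_mul_mul_bosL1_apply {A : Type*} [Ring A]
    (M : Matrix (Fin N × Fin N) (Fin N × Fin N) A) (x y : Fin N → A) (i j m n : Fin N) :
    (bosL1 x y * M * bosL1 x y) (i, j) (m, n) =
      x i * (∑ c : Fin N, ∑ e : Fin N, y c * M (c, j) (e, n) * x e) * y m := by
  simp only [mul_apply, bosL1, of_apply, Fintype.sum_prod_type, mul_ite, mul_one, mul_zero,
    ite_mul, zero_mul, Finset.sum_ite_eq, Finset.sum_ite_eq', Finset.mem_univ, if_true,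
    Finset.sum_mul, Finset.mul_sum, mul_assoc]
  exact Finset.sum_comm

theorem bosL1_mul_map_mul_bosL1 {S A : Type*} [CommSemiring S] [Ring A] [Algebra S A]
    {R : Matrix (Fin N × Fin N) (Fin N × Fin N) S} {c : S} {x y : Fin N → A}
    (h : ∀ i j, ∑ a, ∑ b, R (a, i) (b, j) • (y a * x b) =
      (if i = j then 1 else 0) + c • (x i * y j)) :
    bosL1 x y * R.map (algebraMap S A) * bosL1 x y =
      bosL1 x y + c • vecMulVec (fun p => x p.1 * x p.2) (fun p => y p.2 * y p.1) := by
  ext ⟨i, j⟩ ⟨m, n⟩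
  have hcomm (r : S) (a b : A) : a * algebraMap S A r * b = r • (a * b) := by
    rw [Algebra.smul_def, ← mul_assoc, Algebra.commutes]
  rw [bosL1_mul_mul_bosL1_apply]
  simp only [map_apply, hcomm, h]
  simp only [bosL1, Matrix.add_apply, Matrix.smul_apply, of_apply, vecMulVec_apply, mul_add,
    add_mul, mul_smul_comm, smul_mul_assoc, mul_assoc, mul_ite, ite_mul, mul_one, mul_zero,
    zero_mul]

end BosL1

theorem bosonization_modified_RE_general {N : ℕ}
    {A : Type*} [Ring A] [Algebra K A]
    (R : Matrix (Fin N × Fin N) (Fin N × Fin N) K) (q : K)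
    (x y : Fin N → A)
    (h1 : ∀ i j : Fin N,
      q • (x i * x j) = ∑ k : Fin N, ∑ l : Fin N, R (i, j) (k, l) • (x k * x l))
    (h2 : ∀ i j : Fin N,
      q • (y i * y j) = ∑ k : Fin N, ∑ l : Fin N, R (l, k) (j, i) • (y k * y l))
    (h3 : ∀ i j : Fin N,
      (∑ a : Fin N, ∑ b : Fin N, R (a, i) (b, j) • (y a * x b)) =
        (if i = j then 1 else 0) + q⁻¹ • (x i * y j)) :
    R.map (algebraMap K A) * bosL1 x y * R.map (algebraMap K A) * bosL1 x y -
        bosL1 x y * R.map (algebraMap K A) * bosL1 x y * R.map (algebraMap K A) =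
      R.map (algebraMap K A) * bosL1 x y - bosL1 x y * R.map (algebraMap K A) := by
  set R' := R.map (algebraMap K A)
  set L := bosL1 x y
  calc R' * L * R' * L - L * R' * L * R' = R' * (L * R' * L) - L * R' * L * R' := by
        simp only [Matrix.mul_assoc]
    _ = R' * L - L * R' := by
        rw [bosL1_mul_map_mul_bosL1 h3, mul_add, add_mul, Matrix.mul_smul, Matrix.smul_mul,
          mul_vecMulVec, vecMulVec_mul, map_mulVec_mul_self_eq_smul h1,
          mul_self_swap_vecMul_map_eq_smul h2, smul_vecMulVec, vecMulVec_smul]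
        abel

/-- bosonization of the modified RE algebra: in any associative
algebra with elements x_i, x^j subject to
q x_i x_j = R_{ij}^{kl} x_k x_l,  q x^i x^j = R_{lk}^{ji} x^k x^l,
and x^a R_{ai}^{bj} x_b = δ_i^j + q⁻¹ x_i x^j, the matrix L with entries
l_i^j = x_i x^j satisfies the modified Reflection Equation
R L₁ R L₁ − L₁ R L₁ R = R L₁ − L₁ R. -/
theorem bosonization_modified_RE {N : ℕ}
    {A : Type*} [Ring A] [Algebra K A]
    (R : Matrix (Fin N × Fin N) (Fin N × Fin N) K) (q : K) (hq0 : q ≠ 0)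
    (x y : Fin N → A)
    (h1 : ∀ i j : Fin N,
      q • (x i * x j) = ∑ k : Fin N, ∑ l : Fin N, R (i, j) (k, l) • (x k * x l))
    (h2 : ∀ i j : Fin N,
      q • (y i * y j) = ∑ k : Fin N, ∑ l : Fin N, R (l, k) (j, i) • (y k * y l))
    (h3 : ∀ i j : Fin N,
      (∑ a : Fin N, ∑ b : Fin N, R (a, i) (b, j) • (y a * x b)) =
        (if i = j then 1 else 0) + q⁻¹ • (x i * y j)) :
    R.map (algebraMap K A) * bosL1 x y * R.map (algebraMap K A) * bosL1 x y -
        bosL1 x y * R.map (algebraMap K A) * bosL1 x y * R.map (algebraMap K A) =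
      R.map (algebraMap K A) * bosL1 x y - bosL1 x y * R.map (algebraMap K A) :=
  bosonization_modified_RE_general R q x y h1 h2 h3
end

section
/- Let R be a skew-invertible Hecke symmetry and Ψ its skew-inverse, B = Tr₁Ψ. In the free algebra generated by symbols x_i and x̃^j, the permutation relations x̃^i x_j = δ_j^i + q⁻¹ x_k x̃^l (R⁻¹)_{jl}^{ik} map the ideal generated by the elements q x_i x_j − R_{ij}^{ab} x_a x_b into itself: explicitly, x̃^k (q x_i x_j − R_{ij}^{ab} x_a x_b) = q^{−2} (R⁻¹)_{js}^{rb} (R⁻¹)_{ir}^{ka} (q x_a x_b − R_{ab}^{cd} x_c x_d) x̃^s modulo the relations, so the permutation relations are compatible with the algebra structure of Sym_R(V). -/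
open Matrix BigOperators

variable {K : Type*} [Field K]

/-!
Put `S = R - (q - q⁻¹) = R⁻¹` and `P = q - R`, so that the ideal is generated by
`P_{ij}^{ab} x_a x_b` (the matrix entry `P (i, j) (a, b)`). Applying the permutation rule twice
moves `x̃^k` past `x_a x_b` and leaves a linear part with coefficients `1 + q⁻¹ S` and a part
`x_m x_n x̃^t` with coefficient tensor `S₂₃ S₁₂`. Contracted with `P`, the linear part has
coefficients `P (1 + q⁻¹ S)`, which vanish by the Hecke condition, and the cubic part has
coefficients `P₁₂ S₂₃ S₁₂ = S₂₃ S₁₂ P₂₃` by the braid relation; the latter is the tensor `S₂₃ S₁₂`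
contracted with the generators `P_{ab}^{cd} x_c x_d`.
-/

theorem mul_inv_mul_inv_eq_of_braid {G : Type*} [Group G] {a b : G} (h : a * b * a = b * a * b) :
    a * (b⁻¹ * a⁻¹) = b⁻¹ * a⁻¹ * b :=
  calc a * (b⁻¹ * a⁻¹) = b⁻¹ * a⁻¹ * (a * b * a * b⁻¹ * a⁻¹) := by group
    _ = b⁻¹ * a⁻¹ * b := by rw [h]; group

def heckeUnit {B : Type*} [Ring B] [Algebra K B] {r : B} {c : K} (h : r * r = c • r + 1) : Bˣ where
  val := r
  inv := r - c • 1
  val_inv := by rw [mul_sub, mul_smul_one, h, add_sub_cancel_left]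
  inv_val := by rw [sub_mul, smul_one_mul, h, add_sub_cancel_left]

theorem hecke_mul_eq_zero {B : Type*} [Ring B] [Algebra K B] {r : B} {q : K} (hq : q ≠ 0)
    (h : r * r = (q - q⁻¹) • r + 1) :
    (q • 1 - r) * (1 + q⁻¹ • (r - (q - q⁻¹) • 1)) = 0 := by
  set s := r - (q - q⁻¹) • 1 with hs
  have hrs : r * s = 1 := (heckeUnit h).val_inv
  rw [sub_mul, smul_one_mul, smul_add, mul_add, mul_one, mul_smul_comm, hrs, smul_smul,
    mul_inv_cancel₀ hq, hs]
  module

section Lift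

variable {N : ℕ}

theorem lift12_mul_apply (A : Matrix (Fin N × Fin N) (Fin N × Fin N) K)
    (B : Matrix (Fin N × Fin N × Fin N) (Fin N × Fin N × Fin N) K) (i j t : Fin N)
    (v : Fin N × Fin N × Fin N) :
    (lift12 A * B) (i, j, t) v = ∑ a, ∑ b, A (i, j) (a, b) * B (a, b, t) v := by
  simp [lift12, Matrix.mul_apply, Fintype.sum_prod_type]

theorem mul_lift23_apply (B : Matrix (Fin N × Fin N × Fin N) (Fin N × Fin N × Fin N) K)
    (A : Matrix (Fin N × Fin N) (Fin N × Fin N) K) (u : Fin N × Fin N × Fin N) (k m n : Fin N) :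
    (B * lift23 A) u (k, m, n) = ∑ a, ∑ b, B u (k, a, b) * A (a, b) (m, n) := by
  simp [lift23, Matrix.mul_apply, Fintype.sum_prod_type]

theorem lift23_mul_lift12_apply (A B : Matrix (Fin N × Fin N) (Fin N × Fin N) K)
    (a b t k m n : Fin N) :
    (lift23 A * lift12 B) (a, b, t) (k, m, n) = ∑ l, A (b, t) (l, n) * B (a, l) (k, m) := by
  simp [lift12, lift23, Matrix.mul_apply, Fintype.sum_prod_type]

def lift12AlgHom :
    Matrix (Fin N × Fin N) (Fin N × Fin N) K →ₐ[K]
      Matrix (Fin N × Fin N × Fin N) (Fin N × Fin N × Fin N) K :=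
  AlgHom.ofLinearMap
    { toFun := lift12
      map_add' := fun A B => by ext; simp only [lift12, Matrix.add_apply, Matrix.of_apply, add_mul]
      map_smul' := fun c A => by ext; simp [lift12] }
    (by ext; simp [lift12, Matrix.one_apply, Prod.ext_iff]; split_ifs <;> simp_all)
    (fun A B => by
      ext p r
      simp [lift12, Matrix.mul_apply, Fintype.sum_prod_type])

def lift23AlgHom :
    Matrix (Fin N × Fin N) (Fin N × Fin N) K →ₐ[K]
      Matrix (Fin N × Fin N × Fin N) (Fin N × Fin N × Fin N) K :=
  AlgHom.ofLinearMap
    { toFun := lift23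
      map_add' := fun A B => by ext; simp [lift23, mul_add]
      map_smul' := fun c A => by ext; simp [lift23, mul_left_comm] }
    (by ext; simp [lift23, Matrix.one_apply, Prod.ext_iff]; split_ifs <;> simp_all)
    (fun A B => by
      ext p r
      simp [lift23, Matrix.mul_apply, Fintype.sum_prod_type, Finset.mul_sum])

@[simp]
theorem lift12AlgHom_apply (A : Matrix (Fin N × Fin N) (Fin N × Fin N) K) :
    lift12AlgHom A = lift12 A :=
  rfl

@[simp]
theorem lift23AlgHom_apply (A : Matrix (Fin N × Fin N) (Fin N × Fin N) K) :
    lift23AlgHom A = lift23 A :=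
  rfl

theorem smul_one_sub_mul_inv_mul_inv_of_braid {B : Type*} [Ring B] [Algebra K B] {a b : Bˣ}
    (h : a * b * a = b * a * b) (c : K) :
    (c • 1 - (a : B)) * ↑(b⁻¹ * a⁻¹) = ↑(b⁻¹ * a⁻¹) * (c • 1 - (b : B)) := by
  rw [sub_mul, mul_sub, smul_one_mul, mul_smul_one, ← Units.val_mul, ← Units.val_mul,
    mul_inv_mul_inv_eq_of_braid h]

theorem lift12_smul_one_sub_mul_of_braid {R S : Matrix (Fin N × Fin N) (Fin N × Fin N) K}
    (hRS : R * S = 1) (hSR : S * R = 1)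
    (hbraid : lift12 R * lift23 R * lift12 R = lift23 R * lift12 R * lift23 R) (c : K) :
    lift12 (c • 1 - R) * (lift23 S * lift12 S) = lift23 S * lift12 S * lift23 (c • 1 - R) := by
  let u : (Matrix (Fin N × Fin N) (Fin N × Fin N) K)ˣ := ⟨R, S, hRS, hSR⟩
  have h := smul_one_sub_mul_inv_mul_inv_of_braid
    (a := Units.map lift12AlgHom.toMonoidHom u) (b := Units.map lift23AlgHom.toMonoidHom u)
    (Units.ext (by simpa using hbraid)) c
  simp only [← lift12AlgHom_apply, ← lift23AlgHom_apply, map_sub, map_smul, map_one]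
  simpa [u] using h

end Lift

section Relations

variable {N : ℕ} {A : Type*} [Ring A] [Algebra K A]

def PermutationRelations (S : Matrix (Fin N × Fin N) (Fin N × Fin N) K) (c : K)
    (x xt : Fin N → A) : Prop :=
  ∀ i j, xt i * x j = (if i = j then (1 : A) else 0) + c • ∑ k, ∑ l, S (j, l) (i, k) • (x k * xt l)

def quadSum (P : Matrix (Fin N × Fin N) (Fin N × Fin N) K) (x : Fin N → A) (a b : Fin N) : A :=
  ∑ c, ∑ d, P (a, b) (c, d) • (x c * x d)

theorem sum_one_add_smul_apply_smul (S : Matrix (Fin N × Fin N) (Fin N × Fin N) K) (c : K)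
    (x : Fin N → A) (a b k : Fin N) :
    ∑ m, (1 + c • S) (a, b) (k, m) • x m =
      (if k = a then x b else 0) + c • ∑ m, S (a, b) (k, m) • x m := by
  simp [add_smul, Matrix.one_apply, Prod.ext_iff, Finset.sum_add_distrib, Finset.smul_sum,
    smul_smul, ite_smul, ite_and, eq_comm]

theorem PermutationRelations.mul_mul {S : Matrix (Fin N × Fin N) (Fin N × Fin N) K} {c : K}
    {x xt : Fin N → A} (h : PermutationRelations S c x xt) (k a b : Fin N) :
    xt k * (x a * x b) = ∑ m, (1 + c • S) (a, b) (k, m) • x m +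
      (c * c) • ∑ t, ∑ m, ∑ n, (lift23 S * lift12 S) (a, b, t) (k, m, n) • (x m * x n * xt t) := by
  unfold PermutationRelations at h
  rw [← mul_assoc, h k a, sum_one_add_smul_apply_smul, add_assoc, add_mul, ite_mul, one_mul, zero_mul]
  congr 1
  simp only [smul_mul_assoc, Finset.sum_mul, mul_assoc, h, mul_add, Finset.mul_sum, mul_smul_comm,
    smul_add, Finset.smul_sum, Finset.sum_add_distrib, mul_ite, mul_one, mul_zero, smul_ite,
    smul_zero, Finset.sum_ite_eq', Finset.mem_univ, if_true, lift23_mul_lift12_apply, smul_smul,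
    Finset.sum_smul]
  rw [add_right_inj]
  conv_lhs => enter [2, m]; rw [← Finset.sum_comm_cycle, Finset.sum_comm]
  rw [Finset.sum_comm]
  refine Finset.sum_congr rfl fun t _ => Finset.sum_congr rfl fun m _ =>
    Finset.sum_congr rfl fun n _ => Finset.sum_congr rfl fun l _ => ?_
  congr 1
  ring

theorem PermutationRelations.mul_quadSum {S : Matrix (Fin N × Fin N) (Fin N × Fin N) K} {c : K}
    {x xt : Fin N → A} (h : PermutationRelations S c x xt)
    (P : Matrix (Fin N × Fin N) (Fin N × Fin N) K) (i j k : Fin N) :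
    xt k * quadSum P x i j = ∑ m, (P * (1 + c • S)) (i, j) (k, m) • x m +
      (c * c) • ∑ t, ∑ m, ∑ n,
        (lift12 P * (lift23 S * lift12 S)) (i, j, t) (k, m, n) • (x m * x n * xt t) := by
  simp only [quadSum, Finset.mul_sum, mul_smul_comm, h.mul_mul, smul_add, Finset.sum_add_distrib]
  refine congrArg₂ (· + ·) ?_ ?_
  · simp only [Matrix.mul_apply, Fintype.sum_prod_type, Finset.sum_smul, Finset.smul_sum, smul_smul]
    exact Finset.sum_comm_cycle
  · simp only [lift12_mul_apply, Finset.sum_smul, Finset.smul_sum, smul_smul]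
    conv_lhs =>
      rw [Finset.sum_comm_cycle]; enter [2, t]; rw [Finset.sum_comm_cycle]
      enter [2, m]; rw [Finset.sum_comm_cycle]
    simp only [mul_left_comm _ (c * c)]

theorem sum_smul_quadSum (M : Matrix (Fin N × Fin N × Fin N) (Fin N × Fin N × Fin N) K)
    (P : Matrix (Fin N × Fin N) (Fin N × Fin N) K) (x : Fin N → A) (u : Fin N × Fin N × Fin N)
    (k : Fin N) :
    ∑ a, ∑ b, M u (k, a, b) • quadSum P x a b =
      ∑ m, ∑ n, (M * lift23 P) u (k, m, n) • (x m * x n) := by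
  simp only [quadSum, mul_lift23_apply, Finset.smul_sum, Finset.sum_smul, smul_smul]
  conv_lhs => rw [Finset.sum_comm_cycle]; enter [2, m]; rw [Finset.sum_comm_cycle]

theorem quadSum_smul_one_sub (R : Matrix (Fin N × Fin N) (Fin N × Fin N) K) (q : K)
    (x : Fin N → A) (i j : Fin N) :
    quadSum (q • 1 - R) x i j = q • (x i * x j) - ∑ a, ∑ b, R (i, j) (a, b) • (x a * x b) := by
  simp [quadSum, sub_smul, Finset.sum_sub_distrib, Matrix.one_apply, ite_smul, ite_and]

end Relations

/-- for a Hecke symmetry R with R⁻¹ = R − (q−q⁻¹)I, the permutation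
relations x̃^i x_j = δ_j^i + q⁻¹ x_k x̃^l (R⁻¹)_{jl}^{ik} are compatible with the
defining relations q x_i x_j = R_{ij}^{ab} x_a x_b of Sym_R(V): explicitly,
x̃^k (q x_i x_j − R_{ij}^{ab} x_a x_b)
= q⁻² (R⁻¹)_{js}^{rb} (R⁻¹)_{ir}^{ka} (q x_a x_b − R_{ab}^{cd} x_c x_d) x̃^s. -/
theorem permutation_relations_preserve_ideal {N : ℕ}
    {A : Type*} [Ring A] [Algebra K A]
    (R : Matrix (Fin N × Fin N) (Fin N × Fin N) K) (q : K) (hq0 : q ≠ 0)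
    (hbraid : lift12 R * lift23 R * lift12 R = lift23 R * lift12 R * lift23 R)
    (hHecke : R * R = (q - q⁻¹) • R + 1)
    (x xt : Fin N → A)
    (hperm : ∀ i j : Fin N,
      xt i * x j = (if i = j then (1 : A) else 0) +
        q⁻¹ • ∑ k : Fin N, ∑ l : Fin N,
          (R - (q - q⁻¹) • (1 : Matrix (Fin N × Fin N) (Fin N × Fin N) K)) (j, l) (i, k) •
            (x k * xt l)) :
    ∀ i j k : Fin N,
      xt k * (q • (x i * x j) - ∑ a : Fin N, ∑ b : Fin N, R (i, j) (a, b) • (x a * x b)) =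
        (q⁻¹ * q⁻¹) • ∑ r : Fin N, ∑ s : Fin N, ∑ a : Fin N, ∑ b : Fin N,
          ((R - (q - q⁻¹) • (1 : Matrix (Fin N × Fin N) (Fin N × Fin N) K)) (j, s) (r, b) *
            (R - (q - q⁻¹) • (1 : Matrix (Fin N × Fin N) (Fin N × Fin N) K)) (i, r) (k, a)) •
            ((q • (x a * x b) -
              ∑ c : Fin N, ∑ d : Fin N, R (a, b) (c, d) • (x c * x d)) * xt s) := by
  intro i j k
  set S := R - (q - q⁻¹) • (1 : Matrix (Fin N × Fin N) (Fin N × Fin N) K)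
  have hS : PermutationRelations S q⁻¹ x xt := hperm
  have hlinear : (q • 1 - R) * (1 + q⁻¹ • S) = 0 := hecke_mul_eq_zero hq0 hHecke
  have hcubic : lift12 (q • 1 - R) * (lift23 S * lift12 S) =
      lift23 S * lift12 S * lift23 (q • 1 - R) :=
    lift12_smul_one_sub_mul_of_braid (heckeUnit hHecke).val_inv (heckeUnit hHecke).inv_val hbraid q
  rw [← quadSum_smul_one_sub, hS.mul_quadSum, hlinear, hcubic]
  simp only [Matrix.zero_apply, zero_smul, Finset.sum_const_zero, zero_add]
  congr 1
  calc _ = ∑ t, (∑ a, ∑ b,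
          (lift23 S * lift12 S) (i, j, t) (k, a, b) • quadSum (q • 1 - R) x a b) * xt t := by
        simp only [sum_smul_quadSum, Finset.sum_mul, smul_mul_assoc]
    _ = _ := by
        simp only [lift23_mul_lift12_apply, Finset.sum_mul, Finset.sum_smul, smul_mul_assoc,
          quadSum_smul_one_sub]
        conv_lhs => enter [2, t]; rw [Finset.sum_comm_cycle]
        exact Finset.sum_comm
end
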